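/- For every non-negative integer n, the partition function satisfies p(7n + 5) ≡ 0 (mod 7). -/

import Mathlib

/-!
Let `P = ∑ p(n) Xⁿ` and `E = ∏ (1 - Xⁿ⁺¹)`, so that `P * E = 1`. Over `𝔽₇` this gives
`P = E⁶ * P⁷`, and `P⁷` only involves powers `X^{7m}`; so it suffices that the coefficients of
`E⁶ = (E³)²` vanish in degrees `≡ 5 (mod 7)`. By Jacobi's identity
`E³ = ∑ (-1)ʲ (2j + 1) X^{T j}` with `T j = j(j+1)/2`, such a coefficient is a sum of terms
`± (2j + 1)(2k + 1)` with `T j + T k ≡ 5`. Then `(2j + 1)² + (2k + 1)² = 8 (T j + T k) + 2 ≡ 0`,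
and since `-1` is not a square mod 7, one of `2j + 1`, `2k + 1` is divisible by 7.

Jacobi's identity is proved modulo `Xⁿ` from the finite triple product
`∏_{k<a} (1 - q^{k+1} z) ∏_{k<b} (z - qᵏ) = ∑ᵢ (-1)^{i+b} q^{T(i-b)} [a+b choose i]_q zⁱ`:
differentiating at `z = 1` with `a = b = n + 1` gives `(q;q)_{n+1} (q;q)_n`, the terms
`i = n+1+j` and `i = n-j` pair up to `(-1)ʲ (2j+1) q^{T j}` times the central Gaussian binomial
modulo `qⁿ`, and `(q;q)_{n+1}² [2n+2 choose n+1]_q = (q;q)_{2n+2} ≡ (q;q)_n (mod q^{n+1})`.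
-/

open Finset

theorem dvd_prod_sub_one {ι M : Type*} [CommRing M] {a : M} {s : Finset ι} {f : ι → M}
    (h : ∀ i ∈ s, a ∣ f i - 1) : a ∣ ∏ i ∈ s, f i - 1 := by
  refine prod_induction f (fun x ↦ a ∣ x - 1) (fun x y hx hy ↦ ?_) (by simp) h
  have : x * y - 1 = (x - 1) * y + (y - 1) := by ring
  exact this ▸ dvd_add (hx.mul_right y) hy

theorem pow_dvd_of_pow_dvd_mul_of_dvd_sub_one {A : Type*} [CommRing A] {q u g : A}
    (hu : q ∣ u - 1) : ∀ {D : ℕ}, q ^ D ∣ u * g → q ^ D ∣ g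
  | 0, _ => by simp
  | D + 1, h => by
    have hg : q ^ D ∣ g :=
      pow_dvd_of_pow_dvd_mul_of_dvd_sub_one hu ((pow_dvd_pow q D.le_succ).trans h)
    have : g = u * g - (u - 1) * g := by ring
    rw [this]
    exact dvd_sub h (by rw [pow_succ, mul_comm (u - 1)]; exact mul_dvd_mul hg hu)

-- Defined on `ℤ` because the exponents `T (i - b)` of the triple product have negative arguments.
def triangle (k : ℤ) : ℕ := (k * (k + 1) / 2).toNat

theorem two_mul_triangle (k : ℤ) : 2 * (triangle k : ℤ) = k * (k + 1) := by
  have hk : 0 ≤ k * (k + 1) := by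
    rcases le_or_gt 0 k with h | h <;> nlinarith
  rw [triangle, Int.toNat_of_nonneg (by omega)]
  exact Int.mul_ediv_cancel' (Int.even_mul_succ_self k).two_dvd

theorem triangle_neg_sub_one (k : ℤ) : triangle (-k - 1) = triangle k := by
  have h1 := two_mul_triangle (-k - 1)
  have h2 := two_mul_triangle k
  have : (triangle (-k - 1) : ℤ) = triangle k := by linarith
  exact_mod_cast this

theorem triangle_add_one (k : ℤ) : (triangle (k + 1) : ℤ) = triangle k + k + 1 := by
  have h1 := two_mul_triangle (k + 1)
  have h2 := two_mul_triangle k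
  linarith

theorem le_triangle (j : ℕ) : j ≤ triangle j := by
  have h := two_mul_triangle j
  have : (j : ℤ) ≤ triangle j := by nlinarith
  exact_mod_cast this

section QBinomial

variable {A : Type*} [CommSemiring A] (q : A)

def qBinomial : ℕ → ℕ → A
  | _, 0 => 1
  | 0, _ + 1 => 0
  | n + 1, k + 1 => qBinomial n k + q ^ (k + 1) * qBinomial n (k + 1)

@[simp]
theorem qBinomial_zero_right (n : ℕ) : qBinomial q n 0 = 1 := by
  cases n <;> rfl

@[simp]
theorem qBinomial_zero_succ (k : ℕ) : qBinomial q 0 (k + 1) = 0 := rfl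

theorem qBinomial_succ_succ (n k : ℕ) :
    qBinomial q (n + 1) (k + 1) = qBinomial q n k + q ^ (k + 1) * qBinomial q n (k + 1) := rfl

theorem qBinomial_eq_zero_of_lt {n k : ℕ} (h : n < k) : qBinomial q n k = 0 := by
  induction n generalizing k with
  | zero => obtain ⟨k, rfl⟩ := Nat.exists_eq_add_of_lt h; simp
  | succ n ih =>
    obtain ⟨k, rfl⟩ := Nat.exists_eq_add_of_lt (Nat.zero_lt_of_lt h)
    rw [qBinomial_succ_succ, ih (by omega), ih (by omega), mul_zero, add_zero]

@[simp]
theorem qBinomial_self (n : ℕ) : qBinomial q n n = 1 := by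
  induction n with
  | zero => rfl
  | succ n ih => rw [qBinomial_succ_succ, ih, qBinomial_eq_zero_of_lt q n.lt_succ_self]; ring

theorem qBinomial_succ_succ' (n k : ℕ) :
    qBinomial q (n + 1) (k + 1) = q ^ (n - k) * qBinomial q n k + qBinomial q n (k + 1) := by
  induction n generalizing k with
  | zero => cases k <;> simp [qBinomial_succ_succ]
  | succ n ih =>
    rcases k with _ | k
    · conv_lhs => rw [qBinomial_succ_succ q (n + 1) 0, ih 0]
      rw [qBinomial_succ_succ q n 0]
      simp only [qBinomial_zero_right, Nat.sub_zero, pow_succ]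
      ring
    rcases lt_trichotomy n k with hnk | rfl | hkn
    · simp [qBinomial_eq_zero_of_lt q (by omega : n + 1 < k + 1),
        qBinomial_eq_zero_of_lt q (by omega : n + 1 < k + 1 + 1),
        qBinomial_eq_zero_of_lt q (by omega : n + 1 + 1 < k + 1 + 1)]
    · simp [qBinomial_eq_zero_of_lt q (by omega : n + 1 < n + 1 + 1)]
    · conv_lhs => rw [qBinomial_succ_succ q (n + 1) (k + 1), ih k, ih (k + 1)]
      rw [qBinomial_succ_succ q n k, qBinomial_succ_succ q n (k + 1)]
      obtain ⟨m, rfl⟩ := Nat.exists_eq_add_of_lt hkn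
      rw [show k + m + 1 + 1 - (k + 1) = m + 1 by omega, show k + m + 1 - k = m + 1 by omega,
        show k + m + 1 - (k + 1) = m by omega]
      ring

theorem qBinomial_symm {n k : ℕ} (h : k ≤ n) : qBinomial q n (n - k) = qBinomial q n k := by
  induction n generalizing k with
  | zero => rw [Nat.le_zero.mp h]
  | succ n ih =>
    rcases k with _ | k
    · simp
    rcases h.eq_or_lt with h | h
    · rw [h, Nat.sub_self, qBinomial_self, qBinomial_zero_right]
    obtain ⟨m, rfl⟩ := Nat.exists_eq_add_of_lt (Nat.lt_of_succ_lt_succ h)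
    have h₁ : qBinomial q (k + m + 1) m = qBinomial q (k + m + 1) (k + 1) := by
      rw [← ih (by omega : k + 1 ≤ k + m + 1), show k + m + 1 - (k + 1) = m by omega]
    have h₂ : qBinomial q (k + m + 1) (m + 1) = qBinomial q (k + m + 1) k := by
      rw [← ih (by omega : k ≤ k + m + 1), show k + m + 1 - k = m + 1 by omega]
    rw [show k + m + 1 + 1 - (k + 1) = m + 1 by omega, qBinomial_succ_succ',
      show k + m + 1 - m = k + 1 by omega, h₁, h₂, qBinomial_succ_succ q (k + m + 1) k,
      add_comm]

end QBinomial

section QBinomialRing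

variable {A : Type*} [CommRing A] (q : A)

theorem qBinomial_succ_add_two_sub (n k : ℕ) :
    qBinomial q (n + 1) (k + 2) - qBinomial q (n + 1) (k + 1) =
      q ^ (k + 2) * qBinomial q n (k + 2) - q ^ (n - k) * qBinomial q n k := by
  rw [qBinomial_succ_succ, qBinomial_succ_succ']
  ring

-- With `n = j + m`: `[2n choose n + j]_q ≡ [2n choose n]_q (mod q^m)`.
theorem pow_dvd_qBinomial_sub_qBinomial (j m : ℕ) :
    q ^ m ∣ qBinomial q (2 * (j + m)) (2 * j + m) - qBinomial q (2 * (j + m)) (j + m) := by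
  induction j generalizing m with
  | zero => simp
  | succ j ih =>
    have hstep := qBinomial_succ_add_two_sub q (2 * (j + m) + 1) (2 * j + m)
    have hmid := ih (m + 1)
    rw [show 2 * (j + m) + 1 - (2 * j + m) = m + 1 by omega] at hstep
    rw [show 2 * (j + (m + 1)) = 2 * (j + m) + 1 + 1 by ring,
      show 2 * j + (m + 1) = 2 * j + m + 1 by ring] at hmid
    rw [show 2 * (j + 1 + m) = 2 * (j + m) + 1 + 1 by ring,
      show 2 * (j + 1) + m = 2 * j + m + 2 by ring, show j + 1 + m = j + (m + 1) by ring,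
      ← sub_add_sub_cancel _ (qBinomial q _ (2 * j + m + 1)), hstep]
    exact dvd_add (dvd_sub (dvd_mul_of_dvd_left (pow_dvd_pow q (by omega)) _)
      (dvd_mul_of_dvd_left (pow_dvd_pow q (by omega)) _)) ((pow_dvd_pow q (by omega)).trans hmid)

def qPochhammer (n : ℕ) : A := ∏ k ∈ range n, (1 - q ^ (k + 1))

theorem qPochhammer_succ (n : ℕ) : qPochhammer q (n + 1) = qPochhammer q n * (1 - q ^ (n + 1)) :=
  prod_range_succ _ n

theorem qPochhammer_mul_qPochhammer_mul_qBinomial (a b : ℕ) :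
    qPochhammer q a * qPochhammer q b * qBinomial q (a + b) a = qPochhammer q (a + b) := by
  induction a generalizing b with
  | zero => simp [qPochhammer]
  | succ a iha =>
    induction b with
    | zero => simp [qPochhammer]
    | succ b ihb =>
      have h₁ := iha (b + 1)
      rw [show a + (b + 1) = a + b + 1 by ring] at h₁
      rw [show a + 1 + b = a + b + 1 by ring] at ihb
      rw [show a + 1 + (b + 1) = a + b + 1 + 1 by ring, qBinomial_succ_succ,
        qPochhammer_succ q (a + b + 1)]
      simp only [qPochhammer_succ q a, qPochhammer_succ q b] at *
      linear_combination (1 - q ^ (a + 1)) * h₁ + q ^ (a + 1) * (1 - q ^ (b + 1)) * ihb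

end QBinomialRing

section TripleProduct

open Polynomial

variable {A : Type*} [CommRing A] (q : A)

def tripleProductCoeff (a b i : ℕ) : A :=
  (-1) ^ (i + b) * q ^ triangle ((i : ℤ) - b) * qBinomial q (a + b) i

noncomputable def tripleProductPoly (a b : ℕ) : A[X] :=
  ∑ i ∈ range (a + b + 1), C (tripleProductCoeff q a b i) * X ^ i

theorem coeff_tripleProductPoly (a b i : ℕ) :
    (tripleProductPoly q a b).coeff i = tripleProductCoeff q a b i := by
  simp only [tripleProductPoly, finsetSum_coeff, coeff_C_mul_X_pow, sum_ite_eq, mem_range]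
  split_ifs with h
  · rfl
  · rw [tripleProductCoeff, qBinomial_eq_zero_of_lt q (by omega), mul_zero]

theorem tripleProductCoeff_succ_left_zero (a b : ℕ) :
    tripleProductCoeff q (a + 1) b 0 = tripleProductCoeff q a b 0 := by
  simp [tripleProductCoeff]

theorem tripleProductCoeff_succ_left_succ (a b i : ℕ) :
    tripleProductCoeff q (a + 1) b (i + 1) =
      tripleProductCoeff q a b (i + 1) - q ^ (a + 1) * tripleProductCoeff q a b i := by
  rcases lt_or_ge (a + b) i with h | h
  · simp [tripleProductCoeff, qBinomial_eq_zero_of_lt q h,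
      qBinomial_eq_zero_of_lt q (by omega : a + b < i + 1),
      qBinomial_eq_zero_of_lt q (by omega : a + 1 + b < i + 1)]
  have hexp :
      triangle ((i + 1 : ℕ) - b : ℤ) + (a + b - i) = a + 1 + triangle ((i : ℤ) - b) := by
    have := triangle_add_one ((i : ℤ) - b)
    push_cast
    rw [show (i : ℤ) + 1 - b = i - b + 1 by ring]
    omega
  have hq := congrArg (q ^ ·) hexp
  simp only [pow_add] at hq
  simp only [tripleProductCoeff, show a + 1 + b = a + b + 1 by ring, qBinomial_succ_succ']
  linear_combination (-1) ^ (i + 1 + b) * qBinomial q (a + b) i * hq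

theorem tripleProductCoeff_succ_right_zero (a b : ℕ) :
    tripleProductCoeff q a (b + 1) 0 = -(q ^ b * tripleProductCoeff q a b 0) := by
  have hexp : triangle ((0 : ℕ) - (b + 1 : ℕ) : ℤ) = triangle ((0 : ℕ) - b : ℤ) + b := by
    have := triangle_add_one ((0 : ℤ) - (b + 1 : ℕ))
    push_cast at this ⊢
    rw [show (0 : ℤ) - (b + 1) + 1 = 0 - b by ring] at this
    omega
  simp only [tripleProductCoeff, hexp, qBinomial_zero_right, pow_add, pow_succ]
  ring

theorem tripleProductCoeff_succ_right_succ (a b i : ℕ) :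
    tripleProductCoeff q a (b + 1) (i + 1) =
      tripleProductCoeff q a b i - q ^ b * tripleProductCoeff q a b (i + 1) := by
  have hexp : triangle ((i + 1 : ℕ) - (b + 1 : ℕ) : ℤ) = triangle ((i : ℤ) - b) ∧
      b + triangle ((i + 1 : ℕ) - b : ℤ) = triangle ((i : ℤ) - b) + (i + 1) := by
    have := triangle_add_one ((i : ℤ) - b)
    push_cast
    rw [show (i : ℤ) + 1 - (b + 1) = i - b by ring, show (i : ℤ) + 1 - b = i - b + 1 by ring]
    omega
  have hq := congrArg (q ^ ·) hexp.2
  simp only [pow_add] at hq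
  simp only [tripleProductCoeff, hexp.1, show a + (b + 1) = a + b + 1 by ring, qBinomial_succ_succ]
  linear_combination -(-1) ^ (i + b) * qBinomial q (a + b) (i + 1) * hq

theorem tripleProductPoly_succ_left (a b : ℕ) :
    tripleProductPoly q (a + 1) b = tripleProductPoly q a b * (1 - C (q ^ (a + 1)) * X) := by
  rw [mul_sub, mul_one, ← mul_assoc]
  ext (_ | i) <;> simp only [coeff_sub, coeff_mul_X_zero, coeff_mul_X, coeff_mul_C,
    coeff_tripleProductPoly, tripleProductCoeff_succ_left_zero, tripleProductCoeff_succ_left_succ]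
  · ring
  · ring

theorem tripleProductPoly_succ_right (a b : ℕ) :
    tripleProductPoly q a (b + 1) = tripleProductPoly q a b * (X - C (q ^ b)) := by
  rw [mul_sub]
  ext (_ | i) <;> simp only [coeff_sub, coeff_mul_X_zero, coeff_mul_X, coeff_mul_C,
    coeff_tripleProductPoly, tripleProductCoeff_succ_right_zero, tripleProductCoeff_succ_right_succ]
  · ring
  · ring

theorem prod_one_sub_mul_prod_sub_eq_tripleProductPoly (a b : ℕ) :
    (∏ k ∈ range a, (1 - C (q ^ (k + 1)) * X)) * ∏ k ∈ range b, (X - C (q ^ k)) =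
      tripleProductPoly q a b := by
  induction a with
  | zero =>
    induction b with
    | zero => simp [tripleProductPoly, tripleProductCoeff, triangle]
    | succ b ih => rw [prod_range_succ, ← mul_assoc, ih, tripleProductPoly_succ_right]
  | succ a ih => rw [prod_range_succ, mul_right_comm, ih, tripleProductPoly_succ_left]

theorem eval_one_derivative_prod_one_sub_mul_prod_sub (n : ℕ) :
    (derivative ((∏ k ∈ range (n + 1), (1 - C (q ^ (k + 1)) * X)) *
      ∏ k ∈ range (n + 1), (X - C (q ^ k)))).eval 1 =
      qPochhammer q (n + 1) * qPochhammer q n := by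
  rw [prod_range_succ' (fun k ↦ X - C (q ^ k)), ← mul_assoc]
  simp [derivative_mul, eval_prod, qPochhammer]

theorem eval_one_derivative_tripleProductPoly (a b : ℕ) :
    (derivative (tripleProductPoly q a b)).eval 1 =
      ∑ i ∈ range (a + b + 1), tripleProductCoeff q a b i * i := by
  simp [tripleProductPoly, derivative_X_pow, eval_finsetSum]

end TripleProduct

section Jacobi

open Polynomial

variable {A : Type*} [CommRing A] (q : A)

def jacobiCubeSum (n : ℕ) : A := ∑ j ∈ range n, (-1) ^ j * (2 * j + 1) * q ^ triangle j

theorem pow_dvd_tripleProductCoeff_add_sub {n j : ℕ} (hj : j ≤ n) :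
    q ^ n ∣ tripleProductCoeff q (n + 1) (n + 1) (n + 1 + j) * (n + 1 + j : ℕ) +
      tripleProductCoeff q (n + 1) (n + 1) (n - j) * (n - j : ℕ) -
      qBinomial q (2 * (n + 1)) (n + 1) * ((-1) ^ j * (2 * j + 1) * q ^ triangle j) := by
  obtain ⟨m, rfl⟩ := Nat.exists_eq_add_of_le hj
  obtain ⟨u, hu⟩ := pow_dvd_qBinomial_sub_qBinomial q j (m + 1)
  obtain ⟨v, hv⟩ := pow_dvd_qBinomial_sub_qBinomial q (j + 1) m
  rw [sub_eq_iff_eq_add'] at hu hv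
  have hsymm :
      qBinomial q (2 * (j + m + 1)) m = qBinomial q (2 * (j + m + 1)) (2 * (j + 1) + m) := by
    rw [← qBinomial_symm q (by omega : m ≤ 2 * (j + m + 1))]
    congr 1
    omega
  have htri₁ : triangle (((j + m + 1 + j : ℕ) : ℤ) - (j + m + 1 : ℕ)) = triangle j := by
    congr 1; push_cast; ring
  have htri₂ : triangle ((m : ℤ) - (j + m + 1 : ℕ)) = triangle j := by
    rw [← triangle_neg_sub_one]; congr 1; push_cast; ring
  have hsign₁ : (-1 : A) ^ (j + m + 1 + j + (j + m + 1)) = (-1) ^ j := by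
    rw [show j + m + 1 + j + (j + m + 1) = j + 2 * (j + m + 1) by ring, pow_add, pow_mul]
    simp
  have hsign₂ : (-1 : A) ^ (m + (j + m + 1)) = -(-1) ^ j := by
    rw [show m + (j + m + 1) = j + 1 + 2 * m by ring, pow_add, pow_mul, pow_succ]
    simp
  rw [show j + (m + 1) = j + m + 1 by ring, show 2 * j + (m + 1) = j + m + 1 + j by ring] at hu
  rw [show j + 1 + m = j + m + 1 by ring] at hv
  rw [Nat.add_sub_cancel_left]
  simp only [tripleProductCoeff, ← two_mul, htri₁, htri₂, hsign₁, hsign₂, hsymm, hu, hv]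
  refine (pow_dvd_pow q (by have := le_triangle j; omega : j + m ≤ m + triangle j)).trans
    ⟨(-1) ^ j * ((2 * j + m + 1) * q * u - m * v), ?_⟩
  push_cast
  ring

theorem sum_range_eq_sum_pairs_add_last {M : Type*} [AddCommMonoid M] (f : ℕ → M) (n : ℕ) :
    ∑ i ∈ range (n + 1 + (n + 1) + 1), f i =
      ∑ j ∈ range (n + 1), (f (n + 1 + j) + f (n - j)) + f (2 * (n + 1)) := by
  rw [show n + 1 + (n + 1) + 1 = n + 1 + (n + 1 + 1) by ring, sum_range_add,
    sum_range_succ (fun j ↦ f (n + 1 + j)), ← sum_range_reflect f, sum_add_distrib, two_mul]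
  simp only [Nat.add_sub_cancel]
  abel

theorem pow_dvd_qPochhammer_mul_qPochhammer_sub (n : ℕ) :
    q ^ n ∣ qPochhammer q (n + 1) * qPochhammer q n -
      qBinomial q (2 * (n + 1)) (n + 1) * jacobiCubeSum q (n + 1) := by
  have h := congrArg (fun f ↦ (derivative f).eval 1)
    (prod_one_sub_mul_prod_sub_eq_tripleProductPoly q (n + 1) (n + 1))
  simp only [eval_one_derivative_prod_one_sub_mul_prod_sub,
    eval_one_derivative_tripleProductPoly] at h
  have htop :
      q ^ n ∣ tripleProductCoeff q (n + 1) (n + 1) (2 * (n + 1)) * (2 * (n + 1) : ℕ) := by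
    have : ((2 * (n + 1) : ℕ) : ℤ) - (n + 1 : ℕ) = (n + 1 : ℕ) := by push_cast; ring
    rw [tripleProductCoeff, this]
    exact dvd_mul_of_dvd_left (dvd_mul_of_dvd_left (dvd_mul_of_dvd_right
      (pow_dvd_pow q ((Nat.le_succ n).trans (le_triangle (n + 1)))) _) _) _
  rw [h, sum_range_eq_sum_pairs_add_last, jacobiCubeSum, mul_sum, add_sub_right_comm,
    ← sum_sub_distrib]
  exact dvd_add (dvd_sum fun j hj ↦ pow_dvd_tripleProductCoeff_add_sub q
    (Nat.lt_succ_iff.mp (mem_range.mp hj))) htop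

theorem pow_dvd_qPochhammer_pow_three_sub (n : ℕ) :
    q ^ n ∣ qPochhammer q (n + 1) ^ 3 - jacobiCubeSum q (n + 1) := by
  have hcentral := qPochhammer_mul_qPochhammer_mul_qBinomial q (n + 1) (n + 1)
  have htail : q ^ (n + 1) ∣ qPochhammer q (n + 1 + (n + 1)) - qPochhammer q n := by
    rw [show n + 1 + (n + 1) = n + (n + 2) by ring, qPochhammer, qPochhammer, prod_range_add,
      ← mul_sub_one]
    exact dvd_mul_of_dvd_right (dvd_prod_sub_one fun k _ ↦ ⟨-q ^ k, by ring⟩) _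
  -- `(q;q)_n ≡ 1 (mod q)` can be cancelled.
  refine pow_dvd_of_pow_dvd_mul_of_dvd_sub_one (u := qPochhammer q n)
    (dvd_prod_sub_one fun k _ ↦ ⟨-q ^ k, by ring⟩) ?_
  have hsplit : qPochhammer q n * (qPochhammer q (n + 1) ^ 3 - jacobiCubeSum q (n + 1)) =
      qPochhammer q (n + 1) ^ 2 * (qPochhammer q (n + 1) * qPochhammer q n -
        qBinomial q (2 * (n + 1)) (n + 1) * jacobiCubeSum q (n + 1)) +
      jacobiCubeSum q (n + 1) * (qPochhammer q (n + 1) * qPochhammer q (n + 1) *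
        qBinomial q (n + 1 + (n + 1)) (n + 1) - qPochhammer q n) := by
    rw [two_mul]; ring
  rw [hsplit, hcentral]
  exact dvd_add (dvd_mul_of_dvd_right (pow_dvd_qPochhammer_mul_qPochhammer_sub q n) _)
    (dvd_mul_of_dvd_right ((pow_dvd_pow q n.le_succ).trans htail) _)

end Jacobi

section PowerSeries

open PowerSeries WithPiTopology

-- Mathlib's `pentagonalSeries R` is the Euler product `∏ (1 - Xⁿ⁺¹)` (`tprod_one_sub_X_pow`).
theorem X_pow_dvd_pentagonalSeries_sub (R : Type*) [CommRing R] (n : ℕ) :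
    (X : R⟦X⟧) ^ (n + 1) ∣ pentagonalSeries R - qPochhammer X n := by
  rw [X_pow_dvd_iff]
  intro d hd
  obtain ⟨s, hs⟩ := Filter.eventually_atTop.mp (coeff_prod_one_sub_X_pow_eventually_eq R d)
  have htail : (X : R⟦X⟧) ^ (n + 1) ∣
      ∏ k ∈ s ∪ range n, (1 - X ^ (k + 1)) - qPochhammer X n := by
    rw [← prod_sdiff (subset_union_right (s₁ := s)), qPochhammer, ← sub_one_mul]
    refine dvd_mul_of_dvd_left (dvd_prod_sub_one fun k hk ↦ ?_) _
    obtain ⟨i, rfl⟩ : ∃ i, k = n + i :=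
      Nat.exists_eq_add_of_le (by simpa using (mem_sdiff.mp hk).2)
    exact ⟨-X ^ i, by ring⟩
  rw [map_sub, ← hs _ subset_union_left, ← map_sub]
  exact X_pow_dvd_iff.mp htail d hd

theorem X_pow_dvd_pentagonalSeries_pow_three_sub (R : Type*) [CommRing R] (n : ℕ) :
    (X : R⟦X⟧) ^ n ∣ pentagonalSeries R ^ 3 - jacobiCubeSum X (n + 1) := by
  rw [← sub_add_sub_cancel _ (qPochhammer X (n + 1) ^ 3)]
  exact dvd_add ((pow_dvd_pow X (by omega)).trans ((X_pow_dvd_pentagonalSeries_sub R (n + 1)).trans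
    (sub_dvd_pow_sub_pow _ _ 3))) (pow_dvd_qPochhammer_pow_three_sub X n)

noncomputable def partitionSeries (R : Type*) [Semiring R] : R⟦X⟧ :=
  PowerSeries.mk fun n ↦ (Fintype.card n.Partition : R)

theorem partitionSeries_mul_pentagonalSeries (R : Type*) [CommRing R] :
    partitionSeries R * pentagonalSeries R = 1 := by
  let _ : TopologicalSpace R := ⊥
  have _ : DiscreteTopology R := ⟨rfl⟩
  have hP :
      HasProd (fun i ↦ ∑' j : ℕ, (X : R⟦X⟧) ^ ((i + 1) * j)) (partitionSeries R) := by
    simpa [Nat.Partition.restricted, partitionSeries] using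
      Nat.Partition.hasProd_powerSeriesMk_card_restricted R (fun _ ↦ True)
  have h := hP.mul (hasProd_one_sub_X_pow R)
  have geom (i : ℕ) : (∑' j : ℕ, (X : R⟦X⟧) ^ ((i + 1) * j)) * (1 - X ^ (i + 1)) = 1 := by
    simp_rw [pow_mul]
    exact tsum_pow_mul_one_sub_of_constantCoeff_eq_zero (by simp)
  simp only [geom] at h
  exact h.unique hasProd_one

theorem coeff_pow_expChar_eq_zero {R : Type*} [CommRing R] (p : ℕ) [ExpChar R p] (f : R⟦X⟧)
    {d : ℕ} (hd : ¬ p ∣ d) : coeff d (f ^ p) = 0 := by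
  have hp := expChar_ne_zero R p
  rw [← MvPowerSeries.map_frobenius_expand p hp]
  change coeff d (PowerSeries.map (frobenius R p) (PowerSeries.expand p hp f)) = 0
  rw [coeff_map, coeff_expand_of_not_dvd p hp f hd, map_zero]

theorem coeff_mul_eq_zero_of_mod_eq {R : Type*} [CommSemiring R] {k r : ℕ} {f g : R⟦X⟧}
    (hf : ∀ i, i % k = r → coeff i f = 0) (hg : ∀ j, ¬ k ∣ j → coeff j g = 0)
    {d : ℕ} (hd : d % k = r) : coeff d (f * g) = 0 := by
  rw [coeff_mul]
  refine sum_eq_zero fun ⟨i, j⟩ hij ↦ ?_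
  rw [HasAntidiagonal.mem_antidiagonal] at hij
  dsimp only at hij ⊢
  by_cases hj : k ∣ j
  · obtain ⟨c, rfl⟩ := hj
    rw [hf i (by rw [← hd, ← hij, Nat.add_mul_mod_self_left]), zero_mul]
  · rw [hg j hj, mul_zero]

end PowerSeries

section ModSeven

open PowerSeries

theorem mul_eq_zero_of_triangle_add_triangle_mod_seven {j k : ℕ}
    (h : (triangle j + triangle k) % 7 = 5) : ((2 * j + 1) * (2 * k + 1) : ZMod 7) = 0 := by
  have hsq :
      ((2 * j + 1) ^ 2 + (2 * k + 1) ^ 2 : ℤ) = 8 * (triangle j + triangle k : ℕ) + 2 := by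
    push_cast
    linear_combination -4 * two_mul_triangle j - 4 * two_mul_triangle k
  have hmod : ((triangle j : ZMod 7) + triangle k) = 5 := by
    rw [← Nat.cast_add, ← ZMod.natCast_mod, h]; rfl
  have := congrArg (Int.cast : ℤ → ZMod 7) hsq
  push_cast at this
  rw [hmod] at this
  have hsquares : ∀ x y : ZMod 7, x ^ 2 + y ^ 2 = 8 * 5 + 2 → x * y = 0 := by decide
  exact hsquares _ _ this

theorem coeff_jacobiCubeSum_sq_eq_zero (n : ℕ) {d : ℕ} (hd : d % 7 = 5) :
    coeff d (jacobiCubeSum (X : (ZMod 7)⟦X⟧) n ^ 2) = 0 := by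
  rw [sq, jacobiCubeSum, sum_mul_sum, map_sum]
  refine sum_eq_zero fun j _ ↦ (map_sum _ _ _).trans (sum_eq_zero fun k _ ↦ ?_)
  have hterm : (-1 : (ZMod 7)⟦X⟧) ^ j * (2 * (j : (ZMod 7)⟦X⟧) + 1) * X ^ triangle j *
      ((-1) ^ k * (2 * (k : (ZMod 7)⟦X⟧) + 1) * X ^ triangle k) =
      C (((-1) ^ (j + k) * ((2 * j + 1) * (2 * k + 1)) : ZMod 7)) *
        X ^ (triangle j + triangle k) := by
    simp only [map_mul, map_pow, map_neg, map_one, map_add, map_natCast, map_ofNat]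
    ring
  rw [hterm, coeff_C_mul_X_pow]
  split_ifs with h
  · rw [mul_eq_zero_of_triangle_add_triangle_mod_seven (h ▸ hd), mul_zero]
  · rfl

theorem coeff_pentagonalSeries_pow_six_eq_zero {d : ℕ} (hd : d % 7 = 5) :
    coeff d (pentagonalSeries (ZMod 7) ^ 6) = 0 := by
  have h := X_pow_dvd_pentagonalSeries_pow_three_sub (ZMod 7) (d + 1)
  have hsq := h.trans (sub_dvd_pow_sub_pow _ _ 2)
  rw [← pow_mul] at hsq
  have hcoeff := X_pow_dvd_iff.mp hsq d (by omega)
  rw [map_sub, sub_eq_zero] at hcoeff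
  rw [hcoeff, coeff_jacobiCubeSum_sq_eq_zero _ hd]

theorem coeff_partitionSeries_eq_zero {d : ℕ} (hd : d % 7 = 5) :
    coeff d (partitionSeries (ZMod 7)) = 0 := by
  have : Fact (Nat.Prime 7) := ⟨by norm_num⟩
  have hPE := partitionSeries_mul_pentagonalSeries (ZMod 7)
  set P := partitionSeries (ZMod 7)
  set E := pentagonalSeries (ZMod 7)
  have hP : P = E ^ 6 * P ^ 7 := by
    calc P = P * (P * E) ^ 6 := by rw [hPE, one_pow, mul_one]
      _ = E ^ 6 * P ^ 7 := by ring
  rw [hP]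
  exact coeff_mul_eq_zero_of_mod_eq (fun i hi ↦ coeff_pentagonalSeries_pow_six_eq_zero hi)
    (fun j hj ↦ coeff_pow_expChar_eq_zero 7 _ hj) hd

end ModSeven

/-- Ramanujan's congruence `p(7n+5) ≡ 0 (mod 7)` for the partition function. -/
theorem partition_congruence_mod_seven (n : ℕ) :
    Fintype.card (Nat.Partition (7 * n + 5)) % 7 = 0 := by
  have h := coeff_partitionSeries_eq_zero (d := 7 * n + 5) (by omega)
  rw [partitionSeries, PowerSeries.coeff_mk, ZMod.natCast_eq_zero_iff] at h
  omega
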